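/- arXiv:0710.5583 — 2 statements merged into one kernel-verified Lean document; each statement's English description precedes it below -/
import Mathlib

section
/- Let g : ℝ → ℝ be continuous with g(0) = 0, satisfying: lim_{s→0} g(s)/s = -ρ for some ρ > 0, and for all a > 0 there exists C_a > 0 with |g(s)| ≤ C_a e^{a s²} for all s > 0. Let G(s) = ∫₀^{|s|} g(t) dt. Then for every a > 0 there exists C_a > 0 such that G(s) ≤ -ρ s²/4 + C_a (e^{a s²} - 1) for all s ∈ ℝ. -/
/-!
Near `0`, `g t < -(ρ / 2) t`; for `t ≥ δ`, `g t ≤ C e^{a t²} ≤ (t / δ) C e^{a t²}`. With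
`K = ρ / (4a) + C / (2aδ)` both are dominated by `-(ρ / 2) t + K · 2at e^{a t²}`, the derivative of
`-ρ t² / 4 + K (e^{a t²} - 1)`, and integrating over `[0, |s|]` gives the bound.
-/

open Filter Set Real Topology

lemma exists_forall_Ioo_lt_mul_of_tendsto_div {g : ℝ → ℝ} {L m : ℝ}
    (hlim : Tendsto (fun s => g s / s) (𝓝[>] 0) (𝓝 L)) (hLm : L < m) :
    ∃ δ > 0, ∀ t ∈ Ioo 0 δ, g t < m * t := by
  obtain ⟨δ, hδ, hsub⟩ := mem_nhdsGT_iff_exists_Ioo_subset.mp (hlim.eventually_lt_const hLm)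
  exact ⟨δ, hδ, fun t ht => (div_lt_iff₀ ht.1).mp (hsub ht)⟩

lemma hasDerivAt_neg_sq_add_gaussian (ρ K a t : ℝ) :
    HasDerivAt (fun u => -ρ * u ^ 2 / 4 + K * (exp (a * u ^ 2) - 1))
      (-(ρ / 2) * t + K * (2 * a * t * exp (a * t ^ 2))) t := by
  have hsq : HasDerivAt (fun u : ℝ => u ^ 2) (2 * t) t := by simpa using hasDerivAt_pow 2 t
  exact (((hsq.const_mul (-ρ)).div_const 4).fun_add
    ((((hsq.const_mul a).exp).sub_const 1).const_mul K)).congr_deriv (by ring)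

lemma le_neg_mul_add_gaussian_deriv {g : ℝ → ℝ} {ρ a C δ t : ℝ} (ha : 0 < a) (hρ : 0 ≤ ρ)
    (hC : 0 ≤ C) (hδ : 0 < δ) (ht : 0 < t) (hsmall : t < δ → g t < -(ρ / 2) * t)
    (hlarge : g t ≤ C * exp (a * t ^ 2)) :
    g t ≤ -(ρ / 2) * t + (ρ / (4 * a) + C / (2 * a * δ)) * (2 * a * t * exp (a * t ^ 2)) := by
  set E := exp (a * t ^ 2)
  have hE : 1 ≤ E := one_le_exp (by positivity)
  have hsplit : -(ρ / 2) * t + (ρ / (4 * a) + C / (2 * a * δ)) * (2 * a * t * E)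
      = ρ * t / 2 * (E - 1) + C * E * (t / δ) := by
    field_simp
    ring
  have hquad : 0 ≤ ρ * t / 2 * (E - 1) := by
    have : 0 ≤ E - 1 := by linarith
    positivity
  rw [hsplit]
  rcases lt_or_ge t δ with htδ | hδt
  · have : 0 ≤ C * E * (t / δ) := by positivity
    have : 0 ≤ ρ * t := by positivity
    linarith [hsmall htδ]
  · have : C * E ≤ C * E * (t / δ) :=
      le_mul_of_one_le_right (by positivity) ((one_le_div hδ).mpr hδt)
    linarith

theorem primitive_upper_bound_general (g : ℝ → ℝ) (hg : Continuous g)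
    (ρ : ℝ) (hρ : 0 < ρ)
    (hlim : Tendsto (fun s => g s / s) (nhdsWithin 0 {(0 : ℝ)}ᶜ) (nhds (-ρ)))
    (hgrowth : ∀ a : ℝ, 0 < a → ∃ C : ℝ, 0 < C ∧ ∀ s : ℝ, 0 < s → |g s| ≤ C * Real.exp (a * s ^ 2))
    (G : ℝ → ℝ) (hG : ∀ s : ℝ, G s = ∫ t in (0 : ℝ)..|s|, g t) :
    ∀ a : ℝ, 0 < a → ∃ C : ℝ, 0 < C ∧
      ∀ s : ℝ, G s ≤ -ρ * s ^ 2 / 4 + C * (Real.exp (a * s ^ 2) - 1) := by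
  intro a ha
  obtain ⟨C, hC, hgC⟩ := hgrowth a ha
  obtain ⟨δ, hδ, hgδ⟩ := exists_forall_Ioo_lt_mul_of_tendsto_div
    (hlim.mono_left (nhdsGT_le_nhdsNE 0)) (by linarith : -ρ < -(ρ / 2))
  set K := ρ / (4 * a) + C / (2 * a * δ)
  refine ⟨K, by positivity, fun s => ?_⟩
  have hbound : ∀ t ∈ Ioo 0 |s|, g t ≤ -(ρ / 2) * t + K * (2 * a * t * exp (a * t ^ 2)) :=
    fun t ht => le_neg_mul_add_gaussian_deriv ha hρ.le hC.le hδ ht.1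
      (fun htδ => hgδ t ⟨ht.1, htδ⟩) ((le_abs_self _).trans (hgC t ht.1))
  have hint := intervalIntegral.integral_le_sub_of_hasDeriv_right_of_le (abs_nonneg s) (by fun_prop)
    (fun t _ => (hasDerivAt_neg_sq_add_gaussian ρ K a t).hasDerivWithinAt)
    hg.integrableOn_Icc hbound
  simpa [hG, sq_abs] using hint

/-- pointwise upper bound on the primitive `G` of `g`. -/
theorem primitive_upper_bound (g : ℝ → ℝ) (hg : Continuous g) (hg0 : g 0 = 0)
    (ρ : ℝ) (hρ : 0 < ρ)
    (hlim : Tendsto (fun s => g s / s) (nhdsWithin 0 {(0 : ℝ)}ᶜ) (nhds (-ρ)))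
    (hgrowth : ∀ a : ℝ, 0 < a → ∃ C : ℝ, 0 < C ∧ ∀ s : ℝ, 0 < s → |g s| ≤ C * Real.exp (a * s ^ 2))
    (G : ℝ → ℝ) (hG : ∀ s : ℝ, G s = ∫ t in (0 : ℝ)..|s|, g t) :
    ∀ a : ℝ, 0 < a → ∃ C : ℝ, 0 < C ∧
      ∀ s : ℝ, G s ≤ -ρ * s ^ 2 / 4 + C * (Real.exp (a * s ^ 2) - 1) :=
  primitive_upper_bound_general g hg ρ hρ hlim hgrowth G hG
end

section
/- Let N = 2 and define T(v) = ½‖∇v‖²_{L²} and P(v) = ∫_{ℝ²} G(v) dx for v ∈ H¹(ℝ²), with G as in the Berestycki–Gallouet–Kavian setting ((g0)-(g3)). Let m := min{ S(v) : v ∈ H¹(ℝ²)\{0}, P(v) = 0 } where S(v) = T(v) - P(v). Then m = inf{ T(v) : v ∈ H¹(ℝ²)\{0}, P(v) ≥ 0 }, and this infimum is attained. -/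
open MeasureTheory Filter

noncomputable def Tfun (v : EuclideanSpace ℝ (Fin 2) → ℝ) : ℝ :=
  (1 / 2) * ∫ x, ‖fderiv ℝ v x‖ ^ 2

def InH1 (v : EuclideanSpace ℝ (Fin 2) → ℝ) : Prop :=
  MemLp v 2 volume ∧ Differentiable ℝ v ∧ MemLp (fun x => fderiv ℝ v x) 2 volume

open Topology Asymptotics Set
open scoped ENNReal

/-! On the constraint `P = 0` we have `S = T`, so the ground state attains `m` as a value of `T`,
and it remains to see `m ≤ T v` when `P v > 0`. Scaling the amplitude, `v ↦ θ v` with `θ ≤ 1`,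
does not increase `T`, and `P (θ v) ≈ -(ρ / 2) θ² ‖v‖²` for small `θ`, so `P (θ v) = 0` for some
`θ ∈ (0, 1]` by the intermediate value theorem. Without the Trudinger–Moser inequality, however,
`θ ↦ P (θ v)` cannot be controlled, so `v` is first replaced by a `C¹` truncation `u` with
`|∇u| ≤ |∇v|` and `|u| ≤ b`. The truncation level is taken where `|G|` times the measure of the
set on which `|v|` exceeds the level is small; such levels exist because `G ∘ v` is integrable,
and they keep `P u > 0`. For bounded `u` dominated convergence makes `θ ↦ P (θ u)` continuous. -/

noncomputable def rampDown (a b t : ℝ) : ℝ := max 0 (min 1 ((b - |t|) / (b - a)))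

/-- A `C¹` stand-in for clipping at level `a` (membership in `InH1` needs classical
differentiability): the identity on `[-a, a]`, with slope decreasing linearly to `0` at `±b`. -/
noncomputable def softTrunc (a b s : ℝ) : ℝ := ∫ t in (0 : ℝ)..s, rampDown a b t

section SoftTrunc

variable {a b : ℝ}

lemma continuous_rampDown : Continuous (rampDown a b) := by
  unfold rampDown; fun_prop

lemma rampDown_nonneg (t : ℝ) : 0 ≤ rampDown a b t := le_max_left _ _

lemma rampDown_le_one (t : ℝ) : rampDown a b t ≤ 1 :=
  max_le zero_le_one (min_le_left _ _)

lemma rampDown_neg (t : ℝ) : rampDown a b (-t) = rampDown a b t := by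
  simp only [rampDown, abs_neg]

lemma rampDown_of_abs_le (hab : a < b) {t : ℝ} (ht : |t| ≤ a) : rampDown a b t = 1 := by
  have : 1 ≤ (b - |t|) / (b - a) := by rw [le_div_iff₀ (sub_pos.2 hab)]; linarith
  simp [rampDown, min_eq_left this]

lemma rampDown_of_le_abs (hab : a ≤ b) {t : ℝ} (ht : b ≤ |t|) : rampDown a b t = 0 := by
  have : (b - |t|) / (b - a) ≤ 0 := div_nonpos_of_nonpos_of_nonneg (by linarith) (by linarith)
  simp [rampDown, min_eq_right (this.trans zero_le_one), this]

lemma hasDerivAt_softTrunc (s : ℝ) : HasDerivAt (softTrunc a b) (rampDown a b s) s :=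
  (continuous_rampDown.integral_hasStrictDerivAt 0 s).hasDerivAt

lemma differentiable_softTrunc : Differentiable ℝ (softTrunc a b) :=
  fun s => (hasDerivAt_softTrunc s).differentiableAt

lemma deriv_softTrunc : deriv (softTrunc a b) = rampDown a b :=
  funext fun s => (hasDerivAt_softTrunc s).deriv

lemma softTrunc_zero : softTrunc a b 0 = 0 := by simp [softTrunc]

lemma softTrunc_neg (s : ℝ) : softTrunc a b (-s) = -softTrunc a b s := by
  calc ∫ t in (0 : ℝ)..-s, rampDown a b t = ∫ t in (0 : ℝ)..-s, rampDown a b (-t) := by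
        simp only [rampDown_neg]
    _ = -softTrunc a b s := by
        rw [intervalIntegral.integral_comp_neg, intervalIntegral.integral_symm]; simp [softTrunc]

lemma softTrunc_nonneg {s : ℝ} (hs : 0 ≤ s) : 0 ≤ softTrunc a b s :=
  intervalIntegral.integral_nonneg hs fun t _ => rampDown_nonneg t

lemma abs_softTrunc (s : ℝ) : |softTrunc a b s| = softTrunc a b |s| := by
  rcases le_total 0 s with hs | hs
  · rw [abs_of_nonneg hs, abs_of_nonneg (softTrunc_nonneg hs)]
  · rw [abs_of_nonpos hs, ← abs_neg, ← softTrunc_neg,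
      abs_of_nonneg (softTrunc_nonneg (neg_nonneg.2 hs))]

lemma softTrunc_add_integral (s t : ℝ) :
    softTrunc a b s + ∫ r in s..t, rampDown a b r = softTrunc a b t :=
  intervalIntegral.integral_add_adjacent_intervals (continuous_rampDown.intervalIntegrable _ _)
    (continuous_rampDown.intervalIntegrable _ _)

lemma softTrunc_of_abs_le (hab : a < b) {s : ℝ} (hs : |s| ≤ a) : softTrunc a b s = s := by
  have : softTrunc a b s = ∫ _ in (0 : ℝ)..s, (1 : ℝ) :=
    intervalIntegral.integral_congr fun t ht => rampDown_of_abs_le hab <| by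
      simpa using (abs_sub_left_of_mem_uIcc ht).trans (by simpa using hs)
  simp [this]

lemma abs_softTrunc_le_abs (s : ℝ) : |softTrunc a b s| ≤ |s| := by
  simpa [softTrunc] using intervalIntegral.norm_integral_le_of_norm_le_const (a := 0) (b := s)
    (f := rampDown a b) (C := 1) fun t _ => by
      rw [Real.norm_eq_abs, abs_of_nonneg (rampDown_nonneg t)]; exact rampDown_le_one t

lemma abs_softTrunc_le (hb : 0 ≤ b) (hab : a ≤ b) (s : ℝ) : |softTrunc a b s| ≤ b := by
  rcases le_total |s| b with hs | hs
  · exact (abs_softTrunc_le_abs s).trans hs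
  · have hflat : ∫ r in b..|s|, rampDown a b r = 0 := by
      refine intervalIntegral.integral_zero_ae (Eventually.of_forall fun r hr => ?_)
      rw [uIoc_of_le hs] at hr
      exact rampDown_of_le_abs hab (hr.1.le.trans (le_abs_self r))
    rw [abs_softTrunc, ← softTrunc_add_integral b, hflat, add_zero]
    simpa [abs_of_nonneg hb] using (le_abs_self _).trans (abs_softTrunc_le_abs (a := a) b)

lemma le_abs_softTrunc (ha : 0 ≤ a) (hab : a < b) {s : ℝ} (hs : a ≤ |s|) :
    a ≤ |softTrunc a b s| := by
  rw [abs_softTrunc, ← softTrunc_add_integral a, softTrunc_of_abs_le hab (abs_of_nonneg ha).le]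
  simpa using intervalIntegral.integral_nonneg hs fun r _ => rampDown_nonneg (a := a) (b := b) r

lemma softTrunc_eq_zero_iff (ha : 0 < a) (hab : a < b) {s : ℝ} : softTrunc a b s = 0 ↔ s = 0 := by
  refine ⟨fun h => ?_, fun h => h ▸ softTrunc_zero (a := a) (b := b)⟩
  rcases le_total |s| a with hs | hs
  · rwa [← softTrunc_of_abs_le hab hs]
  · have := le_abs_softTrunc ha.le hab hs
    rw [h, abs_zero] at this
    linarith

end SoftTrunc

section Nonlinearity

variable {g G : ℝ → ℝ} {ρ : ℝ}

lemma isLittleO_add_sq_of_eq_integral (hg : Continuous g)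
    (hlim : Tendsto (fun s => g s / s) (𝓝[≠] 0) (𝓝 (-ρ)))
    (hG : ∀ s, G s = ∫ t in (0 : ℝ)..|s|, g t) :
    (fun s => G s + ρ / 2 * s ^ 2) =o[𝓝 0] fun s => s ^ 2 := by
  refine isLittleO_iff.2 fun c hc => ?_
  obtain ⟨δ, hδ, hgδ⟩ := Metric.tendsto_nhdsWithin_nhds.1 hlim c hc
  filter_upwards [Metric.ball_mem_nhds 0 hδ] with s hs
  have hslope : ∀ t ∈ uIoc 0 |s|, ‖g t + ρ * t‖ ≤ c * |s| := by
    intro t ht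
    rw [uIoc_of_le (abs_nonneg s)] at ht
    have ht0 : 0 < t := ht.1
    have hclose : |g t / t + ρ| < c := by
      simpa [Real.dist_eq] using hgδ (ne_of_gt ht0)
        (by simpa [Real.dist_eq, abs_of_pos ht0] using ht.2.trans_lt (by simpa using hs))
    have hsplit : g t + ρ * t = (g t / t + ρ) * t := by field_simp
    rw [hsplit, Real.norm_eq_abs, abs_mul, abs_of_pos ht0]
    exact mul_le_mul hclose.le ht.2 ht0.le hc.le
  have hint : G s + ρ / 2 * s ^ 2 = ∫ t in (0 : ℝ)..|s|, (g t + ρ * t) := by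
    rw [intervalIntegral.integral_add (f := g) (g := fun t => ρ * t) (hg.intervalIntegrable _ _)
      ((continuous_const.mul continuous_id).intervalIntegrable _ _),
      intervalIntegral.integral_const_mul, integral_id, hG, sq_abs]
    ring
  calc ‖G s + ρ / 2 * s ^ 2‖ ≤ c * |s| * abs (|s| - 0) := by
        rw [hint]; exact intervalIntegral.norm_integral_le_of_norm_le_const hslope
    _ = c * ‖s ^ 2‖ := by rw [sub_zero, abs_abs, norm_pow, Real.norm_eq_abs]; ring

lemma exists_abs_le_mul_sq {f : ℝ → ℝ} (hf : Continuous f) (h : f =O[𝓝 0] fun s => s ^ 2)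
    (b : ℝ) : ∃ K, 0 ≤ K ∧ ∀ s, |s| ≤ b → |f s| ≤ K * s ^ 2 := by
  obtain ⟨C, hC⟩ := h.bound
  obtain ⟨δ, hδ, hCδ⟩ := Metric.eventually_nhds_iff.1 hC
  obtain ⟨M, hM⟩ := isCompact_Icc.exists_bound_of_continuousOn (hf.continuousOn (s := Icc (-b) b))
  refine ⟨max C 0 + max M 0 / δ ^ 2, by positivity, fun s hs => ?_⟩
  have hM' : 0 ≤ max M 0 / δ ^ 2 * s ^ 2 := by positivity
  rcases lt_or_ge |s| δ with hsδ | hsδ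
  · have hnear : |f s| ≤ C * s ^ 2 := by simpa using hCδ (by simpa using hsδ)
    nlinarith [le_max_left C 0, sq_nonneg s]
  · have hfar : |f s| ≤ M := by simpa using hM s (abs_le.1 hs)
    have hδs : δ ^ 2 ≤ s ^ 2 := by rw [← sq_abs s]; gcongr
    have : max M 0 ≤ max M 0 / δ ^ 2 * s ^ 2 := by
      rw [div_mul_eq_mul_div, le_div_iff₀ (by positivity)]
      exact mul_le_mul_of_nonneg_left hδs (le_max_right _ _)
    nlinarith [le_max_left M 0, le_max_right C 0, sq_nonneg s]

lemma tendsto_comp_mul_div_sq (hG0 : (fun s => G s + ρ / 2 * s ^ 2) =o[𝓝 0] fun s => s ^ 2)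
    (c : ℝ) : Tendsto (fun θ => G (θ * c) / θ ^ 2) (𝓝[≠] 0) (𝓝 (-(ρ / 2) * c ^ 2)) := by
  have hcomp : (fun θ : ℝ => G (θ * c) + ρ / 2 * (θ * c) ^ 2) =o[𝓝 0] fun θ => θ ^ 2 := by
    refine (hG0.comp_tendsto ?_).trans_isBigO ?_
    · simpa using (continuous_id.mul continuous_const).tendsto (0 : ℝ) (f := fun θ : ℝ => θ * c)
    · exact ((isBigO_refl (fun θ : ℝ => θ ^ 2) _).const_mul_left (c ^ 2)).congr_left
        fun θ => by simp only [Function.comp]; ring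
  have hlim := (hcomp.mono (nhdsWithin_le_nhds (s := {0}ᶜ))).tendsto_div_nhds_zero.sub_const
    (ρ / 2 * c ^ 2)
  rw [zero_sub, ← neg_mul] at hlim
  refine hlim.congr' (eventually_nhdsWithin_of_forall fun θ (hθ : θ ≠ 0) => ?_)
  field_simp
  ring

end Nonlinearity

section Tail

variable {α : Type*} [MeasurableSpace α] {μ : Measure α} {f : α → ℝ}

lemma tendsto_measure_setOf_le_atTop (hf : Measurable f) {T : ℝ} (hT : μ {x | T ≤ f x} ≠ ∞) :
    Tendsto (fun t => μ {x | t ≤ f x}) atTop (𝓝 0) := by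
  have hempty : ⋂ t : ℝ, {x | t ≤ f x} = ∅ :=
    eq_empty_of_forall_notMem fun x hx => by
      have := mem_iInter.1 hx (f x + 1); simp at this; linarith
  simpa [hempty, Function.comp_def] using tendsto_measure_iInter_atTop
    (fun t => (measurableSet_le measurable_const hf).nullMeasurableSet)
    (fun s t hst => ofPred_subset_ofPred.2 fun x hx => hst.trans hx) ⟨T, hT⟩

/-- If no such `t` existed, then for every large `t` the set `{t ≤ f < t'}`, with `t'` halving
the tail measure, would carry `∫ Φ ∘ f ≥ c / 2`, against integrability. -/
lemma exists_mul_measureReal_setOf_le_lt (hf : Measurable f) {Φ : ℝ → ℝ} (hΦ : ∀ s, 0 ≤ Φ s)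
    (hint : Integrable (fun x => Φ (f x)) μ) {T : ℝ} (hT : μ {x | T ≤ f x} ≠ ∞) {c : ℝ}
    (hc : 0 < c) : ∃ t, T ≤ t ∧ Φ t * μ.real {x | t ≤ f x} < c := by
  by_contra! hbig
  have hfin : ∀ t, T ≤ t → μ {x | t ≤ f x} ≠ ∞ := fun t ht =>
    ne_top_of_le_ne_top hT (measure_mono (ofPred_subset_ofPred.2 fun x hx => ht.trans hx))
  have hμ := tendsto_measure_setOf_le_atTop hf hT
  have hw : Tendsto (fun t => μ.real {x | t ≤ f x}) atTop (𝓝 0) := by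
    have := (ENNReal.tendsto_toReal ENNReal.zero_ne_top).comp hμ
    rwa [ENNReal.toReal_zero] at this
  obtain ⟨t, hsmall, htT⟩ := ((hint.tendsto_setIntegral_nhds_zero hμ).eventually
    (gt_mem_nhds (half_pos hc)) |>.and (eventually_ge_atTop T)).exists
  have hwt : 0 < μ.real {x | t ≤ f x} := by
    refine measureReal_nonneg.lt_of_ne fun h => ?_
    have := hbig t htT
    rw [← h, mul_zero] at this
    linarith
  obtain ⟨t', hhalf, ht't⟩ := ((hw.eventually (gt_mem_nhds (half_pos hwt))).and
    (eventually_ge_atTop t)).exists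
  have hE := measureReal_sdiff (μ := μ) (ofPred_subset_ofPred.2 fun x hx => ht't.trans hx)
    (measurableSet_le measurable_const hf) (hfin t htT)
  set E := {x | t ≤ f x} \ {x | t' ≤ f x}
  have hEΦ : ∀ x ∈ E, c / μ.real {x | t ≤ f x} ≤ Φ (f x) := by
    rintro x ⟨hx, -⟩
    rw [div_le_iff₀ hwt]
    calc c ≤ Φ (f x) * μ.real {y | f x ≤ f y} := hbig (f x) (htT.trans hx)
      _ ≤ Φ (f x) * μ.real {y | t ≤ f y} := mul_le_mul_of_nonneg_left
        (measureReal_mono (ofPred_subset_ofPred.2 fun y hy => hx.trans hy) (hfin t htT)) (hΦ _)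
  have hEmeas : MeasurableSet E :=
    (measurableSet_le measurable_const hf).diff (measurableSet_le measurable_const hf)
  have hlow := setIntegral_ge_of_const_le hEmeas
    (ne_top_of_le_ne_top (hfin t htT) (measure_mono sdiff_subset)) hEΦ hint.integrableOn
  have hmono := setIntegral_mono_set (s := E) (t := {x | t ≤ f x}) hint.integrableOn
    (Eventually.of_forall fun x => hΦ (f x)) (Eventually.of_forall sdiff_subset)
  rw [smul_eq_mul] at hlow
  have : c / 2 ≤ μ.real E * (c / μ.real {x | t ≤ f x}) := by
    rw [mul_div_assoc', le_div_iff₀ hwt]; nlinarith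
  linarith

lemma tendsto_measureReal_setOf_sub_lt (hf : Measurable f) {t : ℝ}
    (ht : μ {x | t - 1 < f x} ≠ ∞) :
    Tendsto (fun ε => μ.real {x | t - ε < f x}) (𝓝[>] 0) (𝓝 (μ.real {x | t ≤ f x})) := by
  have hinter : ⋂ r > (0 : ℝ), {x | t - r < f x} = {x | t ≤ f x} := by
    ext x
    simp only [mem_iInter, mem_ofPred_eq]
    refine ⟨fun h => ?_, fun hx r hr => by linarith⟩
    by_contra! hx
    linarith [h (t - f x) (by linarith)]
  have := tendsto_measure_biInter_gt (μ := μ) (s := fun ε => {x | t - ε < f x}) (a := 0)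
    (fun r _ => (measurableSet_lt measurable_const hf).nullMeasurableSet)
    (fun i j _ hij => ofPred_subset_ofPred.2 fun x hx => by linarith) ⟨1, one_pos, ht⟩
  rw [hinter] at this
  exact (ENNReal.tendsto_toReal (ne_top_of_le_ne_top ht
    (measure_mono (ofPred_subset_ofPred.2 fun x hx => by linarith)))).comp this

lemma exists_Icc_bound_mul_measureReal_lt (hf : Measurable f) {Φ : ℝ → ℝ} (hΦc : Continuous Φ)
    (hΦ : ∀ s, 0 ≤ Φ s) (hint : Integrable (fun x => Φ (f x)) μ) {T : ℝ}
    (hT : μ {x | T ≤ f x} ≠ ∞) {c : ℝ} (hc : 0 < c) :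
    ∃ a b M, T ≤ a ∧ a < b ∧ (∀ r ∈ Icc a b, Φ r ≤ M) ∧ M * μ.real {x | a < f x} < c := by
  have hT1 : μ {x | T + 1 ≤ f x} ≠ ∞ :=
    ne_top_of_le_ne_top hT (measure_mono (ofPred_subset_ofPred.2 fun x hx => by linarith))
  obtain ⟨t, htT, hlt⟩ := exists_mul_measureReal_setOf_le_lt hf hΦ hint hT1 hc
  set w := μ.real {x | t ≤ f x}
  obtain ⟨η, hηc, hη⟩ : ∃ η, (Φ t + η) * (w + η) < c ∧ 0 < η := by
    have : Tendsto (fun η => (Φ t + η) * (w + η)) (𝓝 0) (𝓝 ((Φ t + 0) * (w + 0))) :=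
      ((continuous_const.add continuous_id).mul (continuous_const.add continuous_id)).tendsto 0
    simp only [add_zero] at this
    exact ((this.mono_left nhdsWithin_le_nhds).eventually (gt_mem_nhds hlt)
      |>.and (self_mem_nhdsWithin (s := Ioi 0))).exists
  obtain ⟨δ, hδ, hΦδ⟩ := Metric.continuousAt_iff.1 (hΦc.continuousAt (x := t)) η hη
  have hμ := tendsto_measureReal_setOf_sub_lt hf (t := t)
    (ne_top_of_le_ne_top hT (measure_mono (ofPred_subset_ofPred.2 fun x hx => by linarith)))
  have hsmall : ∀ᶠ ε in 𝓝[>] (0 : ℝ), ε < min δ 1 :=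
    nhdsWithin_le_nhds (Iio_mem_nhds (lt_min hδ one_pos))
  obtain ⟨ε, hεw, hεδ, (hε0 : 0 < ε)⟩ := ((hμ.eventually
    (gt_mem_nhds (lt_add_of_pos_right w hη))).and (hsmall.and self_mem_nhdsWithin)).exists
  have hεδ' : ε < δ := hεδ.trans_le (min_le_left _ _)
  have hε1 : ε < 1 := hεδ.trans_le (min_le_right _ _)
  refine ⟨t - ε, t + ε, Φ t + η, by linarith, by linarith, fun r hr => ?_, ?_⟩
  · have := hΦδ (x := r) (by rw [Real.dist_eq, abs_lt]; constructor <;> linarith [hr.1, hr.2])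
    rw [Real.dist_eq] at this
    linarith [le_abs_self (Φ r - Φ t)]
  · calc (Φ t + η) * μ.real {x | t - ε < f x} ≤ (Φ t + η) * (w + η) :=
          mul_le_mul_of_nonneg_left hεw.le (by linarith [hΦ t])
      _ < c := hηc

end Tail

section Truncation

variable {α : Type*} [MeasurableSpace α] {μ : Measure α} {G : ℝ → ℝ} {v : α → ℝ}

lemma integral_sub_le_integral_comp_softTrunc (hGc : Continuous G) (hGabs : ∀ s, G |s| = G s)
    (hvm : Measurable v) (hGv : Integrable (fun x => G (v x)) μ) {a b M : ℝ} (ha : 0 ≤ a)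
    (hab : a < b) (hM : ∀ r ∈ Icc a b, |G r| ≤ M) (hfin : μ {x | a < |v x|} ≠ ∞) :
    ∫ x, G (v x) ∂μ - ∫ x in {x | a < |v x|}, |G (v x)| ∂μ - M * μ.real {x | a < |v x|} ≤
      ∫ x, G (softTrunc a b (v x)) ∂μ := by
  set s := {x | a < |v x|}
  have hs : MeasurableSet s := measurableSet_lt measurable_const hvm.abs
  have hwindow : ∀ x ∈ s, |G (softTrunc a b (v x))| ≤ M := fun x hx => by
    rw [← hGabs]
    exact hM _ ⟨le_abs_softTrunc ha hab (le_of_lt hx), abs_softTrunc_le (ha.trans hab.le) hab.le _⟩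
  have hflat : ∀ x ∈ sᶜ, G (softTrunc a b (v x)) = G (v x) := fun x hx => by
    rw [softTrunc_of_abs_le hab (not_lt.1 hx)]
  have hint : Integrable (fun x => G (softTrunc a b (v x))) μ := by
    refine (hGv.abs.add ((integrableOn_const hfin : IntegrableOn (fun _ => M) s μ)
      |>.integrable_indicator hs)).mono'
      ((hGc.comp differentiable_softTrunc.continuous).measurable.comp hvm).aestronglyMeasurable
      (Eventually.of_forall fun x => ?_)
    change |G (softTrunc a b (v x))| ≤ |G (v x)| + s.indicator (fun _ => M) x
    by_cases hx : x ∈ s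
    · rw [indicator_of_mem hx]
      linarith [hwindow x hx, abs_nonneg (G (v x))]
    · rw [hflat x hx, indicator_of_notMem hx, add_zero]
  have hcut := neg_abs_le (∫ x in s, G (softTrunc a b (v x)) ∂μ)
  have hcut' := norm_setIntegral_le_of_norm_le_const (f := fun x => G (softTrunc a b (v x)))
    hfin.lt_top hwindow
  have htail := integral_mono (hGv.integrableOn (s := s)) hGv.abs.integrableOn
    fun x => le_abs_self (G (v x))
  have hsplit := integral_add_compl hs hint
  rw [setIntegral_congr_fun hs.compl fun x hx => hflat x hx] at hsplit
  have hsplitv := integral_add_compl hs hGv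
  simp only [Real.norm_eq_abs] at hcut'
  linarith

lemma exists_integral_comp_softTrunc_pos (hGc : Continuous G) (hGabs : ∀ s, G |s| = G s)
    (hvm : Measurable v) (hv : MemLp v 2 μ) (hpos : 0 < ∫ x, G (v x) ∂μ) :
    ∃ a b, 0 < a ∧ a < b ∧ 0 < ∫ x, G (softTrunc a b (v x)) ∂μ := by
  have hGv : Integrable (fun x => G (v x)) μ := Integrable.of_integral_ne_zero hpos.ne'
  have h1 : μ {x | 1 ≤ |v x|} ≠ ∞ := by
    refine ne_top_of_le_ne_top (hv.integrable_sq.measure_ge_lt_top one_pos).ne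
      (measure_mono (ofPred_subset_ofPred.2 fun x hx => ?_))
    nlinarith [sq_abs (v x)]
  obtain ⟨T, htail, hT1⟩ := ((hGv.abs.tendsto_setIntegral_nhds_zero
    (tendsto_measure_setOf_le_atTop hvm.abs h1)).eventually (gt_mem_nhds (half_pos hpos))
    |>.and (eventually_ge_atTop 1)).exists
  have hT : μ {x | T ≤ |v x|} ≠ ∞ :=
    ne_top_of_le_ne_top h1 (measure_mono (ofPred_subset_ofPred.2 fun x hx => hT1.trans hx))
  obtain ⟨a, b, M, hTa, hab, hM, hMμ⟩ := exists_Icc_bound_mul_measureReal_lt hvm.abs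
    (continuous_abs.comp hGc) (fun s => abs_nonneg (G s))
    (by simpa only [Function.comp_apply, hGabs] using hGv.abs) hT (half_pos hpos)
  have hsub : {x | a < |v x|} ⊆ {x | T ≤ |v x|} :=
    ofPred_subset_ofPred.2 fun x hx => hTa.trans hx.le
  have htail' := setIntegral_mono_set hGv.abs.integrableOn
    (Eventually.of_forall fun x => abs_nonneg (G (v x))) hsub.eventuallyLE
  have hlower := integral_sub_le_integral_comp_softTrunc hGc hGabs hvm hGv (by linarith) hab hM
    (ne_top_of_le_ne_top hT (measure_mono hsub))
  exact ⟨a, b, by linarith, hab, by linarith⟩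

end Truncation

section Scaling

variable {α : Type*} {G : ℝ → ℝ} {u : α → ℝ} {b K : ℝ}

lemma abs_comp_mul_le (hGK : ∀ s, |s| ≤ b → |G s| ≤ K * s ^ 2) (hub : ∀ x, |u x| ≤ b) {θ : ℝ}
    (hθ : |θ| ≤ 1) (x : α) : |G (θ * u x)| ≤ K * θ ^ 2 * u x ^ 2 := by
  have : |θ * u x| ≤ b := by
    rw [abs_mul]
    exact (mul_le_of_le_one_left (abs_nonneg _) hθ).trans (hub x)
  linarith [hGK _ this, show K * (θ * u x) ^ 2 = K * θ ^ 2 * u x ^ 2 by ring]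

variable [MeasurableSpace α] {μ : Measure α}

lemma continuousOn_integral_comp_mul (hGc : Continuous G) (hu : MemLp u 2 μ) (hK : 0 ≤ K)
    (hGK : ∀ s, |s| ≤ b → |G s| ≤ K * s ^ 2) (hub : ∀ x, |u x| ≤ b) :
    ContinuousOn (fun θ => ∫ x, G (θ * u x) ∂μ) (Icc 0 1) := by
  refine continuousOn_of_dominated (bound := fun x => K * u x ^ 2)
    (fun θ _ => hGc.comp_aestronglyMeasurable (hu.1.const_mul θ))
    (fun θ hθ => Eventually.of_forall fun x => ?_) (hu.integrable_sq.const_mul K)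
    (Eventually.of_forall fun x => (hGc.comp (continuous_id.mul continuous_const)).continuousOn)
  have hθ1 : |θ| ≤ 1 := abs_le.2 ⟨by linarith [hθ.1], hθ.2⟩
  have : θ ^ 2 ≤ 1 := by nlinarith [abs_nonneg θ, sq_abs θ]
  calc ‖G (θ * u x)‖ ≤ K * θ ^ 2 * u x ^ 2 := abs_comp_mul_le hGK hub hθ1 x
    _ ≤ K * u x ^ 2 := by nlinarith [sq_nonneg (u x), mul_nonneg hK (sq_nonneg (u x))]

lemma tendsto_integral_comp_mul_div_sq {ρ : ℝ} (hGc : Continuous G)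
    (hG0 : (fun s => G s + ρ / 2 * s ^ 2) =o[𝓝 0] fun s => s ^ 2) (hu : MemLp u 2 μ)
    (hGK : ∀ s, |s| ≤ b → |G s| ≤ K * s ^ 2) (hub : ∀ x, |u x| ≤ b) :
    Tendsto (fun θ => (∫ x, G (θ * u x) ∂μ) / θ ^ 2) (𝓝[>] 0)
      (𝓝 (-(ρ / 2) * ∫ x, u x ^ 2 ∂μ)) := by
  simp only [← integral_div, ← integral_const_mul]
  refine tendsto_integral_filter_of_dominated_convergence (fun x => K * u x ^ 2)
    (Eventually.of_forall fun θ =>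
      (hGc.div_const (θ ^ 2)).comp_aestronglyMeasurable (hu.1.const_mul θ))
    ?_ (hu.integrable_sq.const_mul K)
    (Eventually.of_forall fun x => (tendsto_comp_mul_div_sq hG0 (u x)).mono_left
      (nhdsWithin_mono _ fun θ (hθ : 0 < θ) => hθ.ne'))
  have hsmall : ∀ᶠ θ in 𝓝[>] (0 : ℝ), θ < 1 := nhdsWithin_le_nhds (Iio_mem_nhds one_pos)
  filter_upwards [hsmall, self_mem_nhdsWithin] with θ hθ1 (hθ0 : 0 < θ)
  refine Eventually.of_forall fun x => ?_
  rw [norm_div, norm_pow, Real.norm_eq_abs, Real.norm_eq_abs, sq_abs, div_le_iff₀ (by positivity)]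
  linarith [abs_comp_mul_le hGK hub (abs_le.2 ⟨by linarith, hθ1.le⟩) x]

lemma exists_integral_comp_mul_eq_zero {ρ : ℝ} (hGc : Continuous G)
    (hG0 : (fun s => G s + ρ / 2 * s ^ 2) =o[𝓝 0] fun s => s ^ 2) (hρ : 0 < ρ)
    (hu : MemLp u 2 μ) (hub : ∀ x, |u x| ≤ b) (hu0 : ¬ u =ᵐ[μ] 0)
    (hpos : 0 < ∫ x, G (u x) ∂μ) : ∃ θ ∈ Ioc (0 : ℝ) 1, ∫ x, G (θ * u x) ∂μ = 0 := by
  have hGO : G =O[𝓝 0] fun s => s ^ 2 := by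
    simpa using hG0.isBigO.sub (isBigO_refl (fun s : ℝ => s ^ 2) _ |>.const_mul_left (ρ / 2))
  obtain ⟨K, hK, hGK⟩ := exists_abs_le_mul_sq hGc hGO b
  have hu2 : 0 < ∫ x, u x ^ 2 ∂μ := by
    rw [integral_pos_iff_support_of_nonneg (fun x => sq_nonneg (u x)) hu.integrable_sq,
      Function.support_pow _ two_ne_zero]
    exact pos_iff_ne_zero.2 fun h => hu0 ((Measure.measure_support_eq_zero_iff μ).1 h)
  have hlim : -(ρ / 2) * ∫ x, u x ^ 2 ∂μ < 0 := by nlinarith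
  have hsmall : ∀ᶠ θ in 𝓝[>] (0 : ℝ), θ < 1 := nhdsWithin_le_nhds (Iio_mem_nhds one_pos)
  obtain ⟨θ₀, hneg, hθ₀1, hθ₀0⟩ := ((tendsto_integral_comp_mul_div_sq hGc hG0 hu hGK hub).eventually
    (gt_mem_nhds hlim) |>.and (hsmall.and self_mem_nhdsWithin)).exists
  obtain ⟨θ, hθ, hθ0⟩ := intermediate_value_Icc (le_of_lt hθ₀1)
    ((continuousOn_integral_comp_mul hGc hu hK hGK hub).mono (Icc_subset_Icc hθ₀0.le le_rfl))
    ⟨(neg_of_div_neg_left hneg (sq_nonneg θ₀)).le, by simpa using hpos.le⟩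
  exact ⟨θ, ⟨hθ₀0.trans_le hθ.1, hθ.2⟩, hθ0⟩

end Scaling

section Sobolev

variable {ψ : ℝ → ℝ} {v : EuclideanSpace ℝ (Fin 2) → ℝ}

lemma norm_fderiv_comp_le (hψ : Differentiable ℝ ψ) (hψ' : ∀ s, |deriv ψ s| ≤ 1)
    (hv : Differentiable ℝ v) (x : EuclideanSpace ℝ (Fin 2)) :
    ‖fderiv ℝ (ψ ∘ v) x‖ ≤ ‖fderiv ℝ v x‖ := by
  rw [((hψ _).hasDerivAt.comp_hasFDerivAt x (hv x).hasFDerivAt).fderiv, norm_smul]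
  exact mul_le_of_le_one_left (norm_nonneg _) (hψ' _)

lemma InH1.comp (hψ : Differentiable ℝ ψ) (hψ' : ∀ s, |deriv ψ s| ≤ 1) (hψ0 : ψ 0 = 0)
    (hv : InH1 v) : InH1 (ψ ∘ v) := by
  have hlip : LipschitzWith 1 ψ := lipschitzWith_of_nnnorm_deriv_le hψ fun s => by
    rw [← NNReal.coe_le_coe, coe_nnnorm, NNReal.coe_one, Real.norm_eq_abs]; exact hψ' s
  refine ⟨hv.1.of_le (hψ.continuous.comp hv.2.1.continuous).aestronglyMeasurable
    (Eventually.of_forall fun x => ?_), hψ.comp hv.2.1,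
    hv.2.2.of_le (measurable_fderiv ℝ _).aestronglyMeasurable
      (Eventually.of_forall (norm_fderiv_comp_le hψ hψ' hv.2.1))⟩
  simpa [hψ0] using hlip.dist_le_mul (v x) 0

lemma Tfun_le_of_norm_fderiv_le {w : EuclideanSpace ℝ (Fin 2) → ℝ}
    (hv : MemLp (fun x => fderiv ℝ v x) 2 volume)
    (h : ∀ x, ‖fderiv ℝ w x‖ ≤ ‖fderiv ℝ v x‖) : Tfun w ≤ Tfun v := by
  refine mul_le_mul_of_nonneg_left (integral_mono_of_nonneg
    (Eventually.of_forall fun x => sq_nonneg _) hv.norm.integrable_sq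
    (Eventually.of_forall fun x => pow_le_pow_left₀ (norm_nonneg _) (h x) 2)) (by norm_num)

end Sobolev

lemma exists_integral_eq_zero_Tfun_le {G : ℝ → ℝ} {ρ : ℝ} (hGc : Continuous G)
    (hGabs : ∀ s, G |s| = G s) (hG0 : (fun s => G s + ρ / 2 * s ^ 2) =o[𝓝 0] fun s => s ^ 2)
    (hρ : 0 < ρ) {v : EuclideanSpace ℝ (Fin 2) → ℝ} (hv : InH1 v) (hv0 : ¬ v =ᵐ[volume] 0)
    (hpos : 0 < ∫ x, G (v x)) :
    ∃ w, InH1 w ∧ ¬ w =ᵐ[volume] 0 ∧ ∫ x, G (w x) = 0 ∧ Tfun w ≤ Tfun v := by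
  obtain ⟨a, b, ha, hab, hposu⟩ :=
    exists_integral_comp_softTrunc_pos hGc hGabs hv.2.1.continuous.measurable hv.1 hpos
  have hslope : ∀ s, |deriv (softTrunc a b) s| ≤ 1 := fun s => by
    rw [deriv_softTrunc, abs_of_nonneg (rampDown_nonneg s)]
    exact rampDown_le_one s
  have hu := hv.comp differentiable_softTrunc hslope softTrunc_zero
  have hu0 : ¬ softTrunc a b ∘ v =ᵐ[volume] 0 := fun h =>
    hv0 (h.mono fun x hx => (softTrunc_eq_zero_iff ha hab).1 hx)
  obtain ⟨θ, ⟨hθ0, hθ1⟩, hθ⟩ := exists_integral_comp_mul_eq_zero hGc hG0 hρ hu.1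
    (fun x => abs_softTrunc_le (ha.trans hab).le hab.le (v x)) hu0 hposu
  have hscale : Differentiable ℝ fun s : ℝ => θ * s := by fun_prop
  have hscale' : ∀ s, |deriv (fun s : ℝ => θ * s) s| ≤ 1 := fun s => by
    simp [abs_of_pos hθ0, hθ1]
  refine ⟨(fun s => θ * s) ∘ softTrunc a b ∘ v, hu.comp hscale hscale' (mul_zero θ), fun h => ?_,
    hθ, Tfun_le_of_norm_fderiv_le hv.2.2 fun x => ?_⟩
  · exact hu0 (h.mono fun x hx => (mul_eq_zero.1 hx).resolve_left hθ0.ne')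
  · exact (norm_fderiv_comp_le hscale hscale' hu.2.1 x).trans
      (norm_fderiv_comp_le differentiable_softTrunc hslope hv.2.1 x)

theorem min_on_P_eq_min_T_general
    (g : ℝ → ℝ) (hgc : Continuous g)
    (ρ : ℝ) (hρ : 0 < ρ)
    (hlim : Tendsto (fun s => g s / s) (nhdsWithin 0 {(0 : ℝ)}ᶜ) (nhds (-ρ)))
    (G : ℝ → ℝ) (hG : ∀ s : ℝ, G s = ∫ t in (0 : ℝ)..|s|, g t)
    (P : (EuclideanSpace ℝ (Fin 2) → ℝ) → ℝ) (hP : ∀ v, P v = ∫ x, G (v x))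
    (S : (EuclideanSpace ℝ (Fin 2) → ℝ) → ℝ) (hS : ∀ v, S v = Tfun v - P v)
    (m : ℝ)
    (hmin : IsLeast (S '' {v | InH1 v ∧ ¬ v =ᵐ[volume] 0 ∧ P v = 0}) m) :
    IsLeast (Tfun '' {v | InH1 v ∧ ¬ v =ᵐ[volume] 0 ∧ 0 ≤ P v}) m := by
  obtain ⟨⟨u, ⟨hu, hu0, huP⟩, rfl⟩, hlb⟩ := hmin
  have hGc : Continuous G := by
    rw [funext hG]
    exact (intervalIntegral.continuous_primitive (fun _ _ => hgc.intervalIntegrable _ _) 0).comp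
      continuous_abs
  have hGabs : ∀ s, G |s| = G s := fun s => by rw [hG, hG, abs_abs]
  have hG0 := isLittleO_add_sq_of_eq_integral hgc hlim hG
  refine ⟨⟨u, ⟨hu, hu0, huP.ge⟩, by rw [hS, huP, sub_zero]⟩, ?_⟩
  rintro _ ⟨v, ⟨hv, hv0, hPv⟩, rfl⟩
  obtain ⟨w, hw, hw0, hwP, hwT⟩ : ∃ w, InH1 w ∧ ¬ w =ᵐ[volume] 0 ∧ P w = 0 ∧ Tfun w ≤ Tfun v := by
    rcases hPv.eq_or_lt with hPv | hPv
    · exact ⟨v, hv, hv0, hPv.symm, le_rfl⟩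
    · simp only [hP] at hPv ⊢
      exact exists_integral_eq_zero_Tfun_le hGc hGabs hG0 hρ hv hv0 hPv
  have hSw := hlb ⟨w, ⟨hw, hw0, hwP⟩, rfl⟩
  rw [hS w, hwP, sub_zero] at hSw
  exact hSw.trans hwT

/-- in dimension 2, the least energy level
`m = min{S(v) : v ≠ 0, P(v) = 0}` coincides with `inf{T(v) : v ≠ 0, P(v) ≥ 0}`,
and the latter infimum is attained. -/
theorem min_on_P_eq_min_T
    (g : ℝ → ℝ) (hgc : Continuous g) (hgodd : ∀ s, g (-s) = -g s)
    (ρ : ℝ) (hρ : 0 < ρ)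
    (hlim : Tendsto (fun s => g s / s) (nhdsWithin 0 {(0 : ℝ)}ᶜ) (nhds (-ρ)))
    (hgrowth : ∀ a : ℝ, 0 < a → ∃ C : ℝ, 0 < C ∧ ∀ s : ℝ, 0 < s → |g s| ≤ C * Real.exp (a * s ^ 2))
    (hG3 : ∃ ξ : ℝ, 0 < ξ ∧ 0 < ∫ t in (0 : ℝ)..ξ, g t)
    (G : ℝ → ℝ) (hG : ∀ s : ℝ, G s = ∫ t in (0 : ℝ)..|s|, g t)
    (P : (EuclideanSpace ℝ (Fin 2) → ℝ) → ℝ) (hP : ∀ v, P v = ∫ x, G (v x))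
    (S : (EuclideanSpace ℝ (Fin 2) → ℝ) → ℝ) (hS : ∀ v, S v = Tfun v - P v)
    (m : ℝ) (hm : 0 < m)
    (hmin : IsLeast (S '' {v | InH1 v ∧ ¬ v =ᵐ[volume] 0 ∧ P v = 0}) m) :
    IsLeast (Tfun '' {v | InH1 v ∧ ¬ v =ᵐ[volume] 0 ∧ 0 ≤ P v}) m :=
  min_on_P_eq_min_T_general g hgc ρ hρ hlim G hG P hP S hS m hmin
end
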